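/- For every a ∈ ℝ: (1/π) ∫₀^∞ ∫_{t₂}^∞ exp(−((t₁−a)² + t₂²)/2) dt₁ dt₂ = (1 + erf(a/2))²/4. -/

import Mathlib

/-!
With `G c = gaussTail c = ∫_c^∞ exp(-v²) dv` one has `G(-x) = (√π/2)(1 + erf x)`.
For fixed `t₂` the substitution `t₁ = t₂ + a + 2u` completes the square, turning the
integrand into `exp(-u²) exp(-(t₂ + u)²)` on `u > -a/2`. Integrating out `t₂ > 0` first
leaves `2 ∫_{-a/2}^∞ exp(-u²) G(u) du`, and `∫_c^∞ exp(-u²) G(u) du = G(c)²/2` because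
`-G²/2` is an antiderivative of `exp(-u²) G(u)` vanishing at infinity.
-/

open MeasureTheory

/-- The Gaussian error function `erf x = (2/√π) ∫₀ˣ exp(−t²) dt`. -/
noncomputable def erf (x : ℝ) : ℝ :=
  (2 / Real.sqrt Real.pi) * ∫ t in (0:ℝ)..x, Real.exp (-t ^ 2)

open Real Set Filter Topology

section IoiChangeVariables

variable {E : Type*} [NormedAddCommGroup E] [NormedSpace ℝ E]

theorem integral_comp_add_right_Ioi (g : ℝ → E) (a c : ℝ) :
    ∫ x in Ioi a, g (x + c) = ∫ x in Ioi (a + c), g x := by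
  have hpre : (· + c) ⁻¹' Ioi (a + c) = Ioi a := by ext; simp
  rw [← (measurePreserving_add_right volume c).setIntegral_preimage_emb
    (measurableEmbedding_addRight c) g, hpre]

theorem integral_comp_mul_left_add_Ioi (g : ℝ → E) (a c : ℝ) {b : ℝ} (hb : 0 < b) :
    ∫ x in Ioi a, g (b * x + c) = b⁻¹ • ∫ x in Ioi (b * a + c), g x := by
  rw [integral_comp_mul_left_Ioi (fun x => g (x + c)) a hb, integral_comp_add_right_Ioi]

end IoiChangeVariables

noncomputable def gaussTail (c : ℝ) : ℝ := ∫ u in Ioi c, exp (-u ^ 2)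

lemma integrable_exp_neg_sq : Integrable fun u : ℝ => exp (-u ^ 2) := by
  simpa using integrable_exp_neg_mul_sq one_pos

lemma gaussTail_nonneg (c : ℝ) : 0 ≤ gaussTail c :=
  setIntegral_nonneg measurableSet_Ioi fun _ _ => (exp_pos _).le

lemma gaussTail_zero : gaussTail 0 = √π / 2 := by
  simpa [gaussTail] using integral_gaussian_Ioi 1

lemma gaussTail_eq_sub_intervalIntegral (c : ℝ) :
    gaussTail c = √π / 2 - ∫ u in (0:ℝ)..c, exp (-u ^ 2) := by
  rw [← gaussTail_zero]
  unfold gaussTail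
  rw [← intervalIntegral.integral_interval_add_Ioi (a := 0) (b := c)
    integrable_exp_neg_sq.integrableOn integrable_exp_neg_sq.integrableOn]
  ring

lemma hasDerivAt_gaussTail (c : ℝ) : HasDerivAt gaussTail (-exp (-c ^ 2)) c := by
  rw [funext gaussTail_eq_sub_intervalIntegral]
  exact ((by fun_prop : Continuous fun u : ℝ => exp (-u ^ 2)).integral_hasStrictDerivAt 0 c
    |>.hasDerivAt).const_sub (√π / 2)

lemma tendsto_gaussTail_atTop : Tendsto gaussTail atTop (𝓝 0) := by
  have h := (intervalIntegral_tendsto_integral_Ioi 0 integrable_exp_neg_sq.integrableOn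
    tendsto_id).const_sub (√π / 2)
  change Tendsto _ atTop (𝓝 (√π / 2 - gaussTail 0)) at h
  rw [gaussTail_zero, sub_self] at h
  rw [funext gaussTail_eq_sub_intervalIntegral]
  exact h

lemma gaussTail_neg (x : ℝ) : gaussTail (-x) = √π / 2 * (1 + erf x) := by
  have hodd : ∫ u in (0:ℝ)..-x, exp (-u ^ 2) = -∫ u in (0:ℝ)..x, exp (-u ^ 2) := by
    rw [intervalIntegral.integral_symm, ← neg_zero,
      ← intervalIntegral.integral_comp_neg fun u => exp (-u ^ 2)]
    simp
  rw [gaussTail_eq_sub_intervalIntegral, hodd, erf]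
  field_simp
  ring

lemma integral_exp_neg_sq_mul_gaussTail (c : ℝ) :
    ∫ u in Ioi c, exp (-u ^ 2) * gaussTail u = gaussTail c ^ 2 / 2 := by
  have hderiv (u : ℝ) :
      HasDerivAt (fun u => -(gaussTail u ^ 2 / 2)) (exp (-u ^ 2) * gaussTail u) u :=
    (((hasDerivAt_gaussTail u).pow 2).div_const 2).neg.congr_deriv (by push_cast; ring)
  have hlim : Tendsto (fun u => -(gaussTail u ^ 2 / 2)) atTop (𝓝 0) := by
    simpa using ((tendsto_gaussTail_atTop.pow 2).div_const 2).neg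
  rw [integral_Ioi_of_hasDerivAt_of_nonneg (hderiv c).continuousAt.continuousWithinAt
    (fun u _ => hderiv u) (fun u _ => mul_nonneg (exp_pos _).le (gaussTail_nonneg u)) hlim]
  ring

lemma integral_exp_neg_add_sq (u : ℝ) : ∫ t in Ioi 0, exp (-(t + u) ^ 2) = gaussTail u := by
  rw [integral_comp_add_right_Ioi (fun x => exp (-x ^ 2)), zero_add, gaussTail]

lemma integrable_exp_neg_sq_mul_exp_neg_add_sq :
    Integrable (fun p : ℝ × ℝ => exp (-p.2 ^ 2) * exp (-(p.1 + p.2) ^ 2)) := by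
  have hbound := (integrable_exp_neg_mul_sq (by norm_num : (0:ℝ) < 1 / 4)).mul_prod
    (integrable_exp_neg_mul_sq (by norm_num : (0:ℝ) < 1 / 4))
  refine hbound.mono' (by fun_prop) (ae_of_all _ fun p => ?_)
  rw [norm_of_nonneg (by positivity), ← exp_add, ← exp_add]
  exact exp_le_exp.2 (by nlinarith [sq_nonneg (p.1 + 4 / 3 * p.2)])

lemma integral_Ioi_exp_neg_sq_add_sq_div_two (a t : ℝ) :
    ∫ s in Ioi t, exp (-((s - a) ^ 2 + t ^ 2) / 2)
      = 2 * ∫ u in Ioi (-(a / 2)), exp (-u ^ 2) * exp (-(t + u) ^ 2) := by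
  have hsubst := integral_comp_mul_left_add_Ioi (fun s => exp (-((s - a) ^ 2 + t ^ 2) / 2))
    (-(a / 2)) (t + a) two_pos
  have hsq (u : ℝ) : exp (-((2 * u + (t + a) - a) ^ 2 + t ^ 2) / 2)
      = exp (-u ^ 2) * exp (-(t + u) ^ 2) := by
    rw [← exp_add]
    congr 1
    ring
  simp only [hsq, show 2 * -(a / 2) + (t + a) = t by ring, smul_eq_mul] at hsubst
  rw [hsubst]
  ring

theorem stmt11 (a : ℝ) :
    (1 / Real.pi) *
      ∫ t₂ in Set.Ioi (0:ℝ), ∫ t₁ in Set.Ioi t₂, Real.exp (-((t₁ - a) ^ 2 + t₂ ^ 2) / 2)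
    = (1 + erf (a / 2)) ^ 2 / 4 := by
  have hint : Integrable (Function.uncurry fun t u => exp (-u ^ 2) * exp (-(t + u) ^ 2))
      ((volume.restrict (Ioi (0:ℝ))).prod (volume.restrict (Ioi (-(a / 2))))) := by
    rw [Measure.prod_restrict]
    exact integrable_exp_neg_sq_mul_exp_neg_add_sq.restrict
  simp only [integral_Ioi_exp_neg_sq_add_sq_div_two, integral_const_mul]
  rw [integral_integral_swap hint]
  simp only [integral_const_mul, integral_exp_neg_add_sq]
  rw [integral_exp_neg_sq_mul_gaussTail, gaussTail_neg]
  field_simp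
  rw [sq_sqrt pi_pos.le]
  ring
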